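/- Each of the five elements x₀, x₁², x₀x₄ + x₁x₃, x₃², x₄² of 𝔽₂[x₀,x₁,x₃,x₄] is invariant: ψ applied to each of them equals its image under the canonical map 𝔽₂[x₀,x₁,x₃,x₄] → E. -/

import Mathlib

open MvPolynomial

noncomputable section

/-- `P = 𝔽₂[x₀, x₁, x₃, x₄]`, with variables indexed `0 ↦ x₀, 1 ↦ x₁, 2 ↦ x₃, 3 ↦ x₄`. -/
abbrev P : Type := MvPolynomial (Fin 4) (ZMod 2)

/-- `P[s, t]`, with `0 ↦ s` and `1 ↦ t`. -/
abbrev PE : Type := MvPolynomial (Fin 2) P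

/-- The ideal `(s², t²)` of `P[s, t]`. -/
def Eid : Ideal PE := Ideal.span ({X 0 ^ 2, X 1 ^ 2} : Set PE)

/-- `E = 𝔽₂[x₀, x₁, x₃, x₄][s, t]/(s², t²)`. -/
abbrev E : Type := PE ⧸ Eid

def sE : E := Ideal.Quotient.mk Eid (X 0)
def tE : E := Ideal.Quotient.mk Eid (X 1)

/-- The canonical map `𝔽₂[x₀, x₁, x₃, x₄] → E`. -/
def ι : P →+* E := (Ideal.Quotient.mk Eid).comp (C : P →+* PE)

def x0 : P := X 0
def x1 : P := X 1
def x3 : P := X 2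
def x4 : P := X 3

/-- The coaction of `O(α₂ × α₂) = 𝔽₂[s, t]/(s², t²)` on `Sym(V)`, `V = 𝔽₂{x₀, x₁, x₃, x₄}`. -/
def ψ : P →+* E :=
  (aeval ![ι x0,
           ι x1 + ι x0 * sE,
           ι x3 + ι x0 * tE,
           ι x4 + ι x3 * sE + ι x1 * tE + ι x0 * sE * tE] : P →ₐ[ZMod 2] E).toRingHom


/-! Squaring is additive in characteristic 2 and kills every multiple of `s` or `t`, so the
square of each coordinate change is the square of its constant term. In `x₀x₄ + x₁x₃` the
terms involving `s` or `t` occur exactly twice. -/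

theorem two_eq_zero_of_zmod_two_algebra {A : Type*} [Semiring A] [Algebra (ZMod 2) A] :
    (2 : A) = 0 := by
  rw [← map_ofNat (algebraMap (ZMod 2) A) 2, show (2 : ZMod 2) = 0 from rfl, map_zero]

theorem add_mul_sq_of_sq_eq_zero {R : Type*} [CommRing R] (h2 : (2 : R) = 0) {e : R}
    (he : e ^ 2 = 0) (a b : R) : (a + b * e) ^ 2 = a ^ 2 := by
  linear_combination (a * b * e) * h2 + b ^ 2 * he

theorem sE_sq : sE ^ 2 = 0 :=
  Ideal.Quotient.eq_zero_iff_mem.2 (Ideal.subset_span (by simp))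

theorem tE_sq : tE ^ 2 = 0 :=
  Ideal.Quotient.eq_zero_iff_mem.2 (Ideal.subset_span (by simp))

theorem ψ_x0 : ψ x0 = ι x0 := by simp [ψ, x0]

theorem ψ_x1 : ψ x1 = ι x1 + ι x0 * sE := by simp [ψ, x1]

theorem ψ_x3 : ψ x3 = ι x3 + ι x0 * tE := by simp [ψ, x3]

theorem ψ_x4 : ψ x4 = ι x4 + ι x3 * sE + ι x1 * tE + ι x0 * sE * tE := by simp [ψ, x4]

/-- Each of the five elements `x₀, x₁², x₀x₄ + x₁x₃, x₃², x₄²` of `𝔽₂[x₀, x₁, x₃, x₄]` is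
invariant under the `α₂ × α₂`-coaction `ψ`. -/
theorem generators_invariant :
    ψ x0 = ι x0 ∧
    ψ (x1 ^ 2) = ι (x1 ^ 2) ∧
    ψ (x0 * x4 + x1 * x3) = ι (x0 * x4 + x1 * x3) ∧
    ψ (x3 ^ 2) = ι (x3 ^ 2) ∧
    ψ (x4 ^ 2) = ι (x4 ^ 2) := by
  have h2 : (2 : E) = 0 := two_eq_zero_of_zmod_two_algebra
  refine ⟨ψ_x0, ?_, ?_, ?_, ?_⟩
  · rw [map_pow, map_pow, ψ_x1, add_mul_sq_of_sq_eq_zero (R := E) h2 sE_sq]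
  · simp only [map_add, map_mul, ψ_x0, ψ_x1, ψ_x3, ψ_x4]
    linear_combination (ι x0 * ι x3 * sE + ι x0 * ι x1 * tE + ι x0 ^ 2 * sE * tE) * h2
  · rw [map_pow, map_pow, ψ_x3, add_mul_sq_of_sq_eq_zero (R := E) h2 tE_sq]
  · rw [map_pow, map_pow, ψ_x4,
      show ι x4 + ι x3 * sE + ι x1 * tE + ι x0 * sE * tE
        = (ι x4 + ι x1 * tE) + (ι x3 + ι x0 * tE) * sE by ring,
      add_mul_sq_of_sq_eq_zero (R := E) h2 sE_sq, add_mul_sq_of_sq_eq_zero (R := E) h2 tE_sq]
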